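/- In any feasible update sequence for the update flow network G(C) constructed from a 3-SAT formula C, for every round r strictly before the round in which s updates the blocking pair B and for every variable index j, at most one of the updates (w_1^j, X) and (w_1^j, X̄) has been resolved by round r. -/

import Mathlib

/-!
A formal model of congestion-free flow rerouting (network update scheduling).
An update flow network consists of a source `s`, a terminal `t`, edge
capacities, and `k` update flow pairs, each given by an old `s`-`t` path and
an update (new) `s`-`t` path (represented as lists of vertices) with a demand.
An update sequence assigns to every update `(v, i)` (vertex `v`, pair `i`) a
round; it is feasible if resolving all updates of earlier rounds together with
any subset of the current round always leaves, for every pair, a unique valid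
(capacity-respecting) transient `s`-`t` path among the active edges, and the
family of transient paths jointly respects the capacities.
-/

namespace FlowUpdate

variable {V : Type} [DecidableEq V] {k : ℕ}

/-- The edges of a path given as a list of vertices. -/
def edgesOf (p : List V) : List (V × V) := p.zip p.tail

/-- The subpath of `p` from vertex `a` to vertex `z` (inclusive). -/
def segment (p : List V) (a z : V) : List V :=
  ((p.dropWhile (fun v => decide (v ≠ a))).takeWhile (fun v => decide (v ≠ z))) ++ [z]

/-- The outgoing edge of `v` on the path `p`, if any. -/
def outEdge (p : List V) (v : V) : Option (V × V) :=
  (edgesOf p).find? (fun e => decide (e.1 = v))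

/-- An update flow network with `k` update flow pairs. -/
structure UFN (V : Type) (k : ℕ) where
  s : V
  t : V
  cap : V → V → ℕ
  old : Fin k → List V
  new : Fin k → List V
  demand : Fin k → ℕ

namespace UFN

/-- After resolving the set of updates `U`, edge `e` is active for pair `i` iff
it is an old edge whose tail is not yet updated, or a new edge whose tail is
updated. -/
def active (G : UFN V k) (U : Set (V × Fin k)) (i : Fin k) (e : V × V) : Prop :=
  (e ∈ edgesOf (G.old i) ∧ (e.1, i) ∉ U) ∨ (e ∈ edgesOf (G.new i) ∧ (e.1, i) ∈ U)

/-- `p` is a simple `s`-`t` path all of whose edges satisfy `E`. -/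
def IsPathIn (E : V × V → Prop) (s t : V) (p : List V) : Prop :=
  p.head? = some s ∧ p.getLast? = some t ∧ List.Chain' (fun u v => E (u, v)) p ∧ p.Nodup

/-- `p` respects the capacities for the demand of pair `i`. -/
def ValidPath (G : UFN V k) (i : Fin k) (p : List V) : Prop :=
  ∀ e ∈ edgesOf p, G.demand i ≤ G.cap e.1 e.2

/-- `T` is the unique valid transient path of pair `i` after resolving `U`. -/
def TransientPair (G : UFN V k) (U : Set (V × Fin k)) (i : Fin k) (T : List V) : Prop :=
  IsPathIn (G.active U i) G.s G.t T ∧ G.ValidPath i T ∧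
    ∀ p, IsPathIn (G.active U i) G.s G.t p → G.ValidPath i p → p = T

/-- After resolving `U`, every pair has a unique valid transient path, and the
family of transient paths jointly respects the capacities. -/
def TransientFamily (G : UFN V k) (U : Set (V × Fin k)) : Prop :=
  ∃ T : Fin k → List V,
    (∀ i, G.TransientPair U i (T i)) ∧
    (∀ u v : V, (∑ i : Fin k, if (u, v) ∈ edgesOf (T i) then G.demand i else 0) ≤ G.cap u v)

/-- An update sequence (an assignment of rounds to all updates) is feasible if
after resolving all updates of rounds `< r` together with any subset of the
updates of round `r`, all pairs admit a transient family. -/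
def Feasible (G : UFN V k) (R : V × Fin k → ℕ) : Prop :=
  ∀ r : ℕ, ∀ S : Set (V × Fin k), (∀ u ∈ S, R u = r) →
    G.TransientFamily ({u | R u < r} ∪ S)

/-- `p` is a simple path from the source to the terminal. -/
def IsStPath (G : UFN V k) (p : List V) : Prop :=
  p.head? = some G.s ∧ p.getLast? = some G.t ∧ p.Nodup

/-- Well-formedness of an update flow network: all old and new flows are simple
`s`-`t` paths, each pair forms a DAG, each new path respects capacities for its
own demand, and both the old family and the new family jointly respect the
capacities. -/
def WellFormed (G : UFN V k) : Prop :=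
  (∀ i, G.IsStPath (G.old i) ∧ G.IsStPath (G.new i)) ∧
  (∀ i, ∃ ord : V → ℕ, ∀ e ∈ edgesOf (G.old i) ++ edgesOf (G.new i), ord e.1 < ord e.2) ∧
  (∀ i, G.ValidPath i (G.new i)) ∧
  (∀ u v : V, (∑ i : Fin k, if (u, v) ∈ edgesOf (G.old i) then G.demand i else 0) ≤ G.cap u v) ∧
  (∀ u v : V, (∑ i : Fin k, if (u, v) ∈ edgesOf (G.new i) then G.demand i else 0) ≤ G.cap u v)

/-- The common vertices of the old and new path of pair `i`, in path order. -/
def commons (G : UFN V k) (i : Fin k) : List V :=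
  (G.old i).filter (fun v => decide (v ∈ G.new i))

/-- A block of pair `i` is a pair `(a, z)` of consecutive common vertices of the
old and new paths of `i`. -/
def IsBlock (G : UFN V k) (i : Fin k) (b : V × V) : Prop :=
  b ∈ edgesOf (G.commons i)

/-- A (candidate) block: a pair index together with its start and end vertices. -/
abbrev Blk (V : Type) (k : ℕ) := Fin k × V × V

def IsBlk (G : UFN V k) (b : Blk V k) : Prop := G.IsBlock b.1 b.2

/-- The old-path segment of a block. -/
def blkOldSeg (G : UFN V k) (b : Blk V k) : List V := segment (G.old b.1) b.2.1 b.2.2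

/-- The update-path segment of a block. -/
def blkNewSeg (G : UFN V k) (b : Blk V k) : List V := segment (G.new b.1) b.2.1 b.2.2

/-- Block `b1` depends on block `b2` (written `b1 → b2`) if they belong to
different pairs and some edge lies on `b1`'s update path and on `b2`'s old path
with capacity less than the sum of the two demands. -/
def Dep (G : UFN V k) (b1 b2 : Blk V k) : Prop :=
  G.IsBlk b1 ∧ G.IsBlk b2 ∧ b1.1 ≠ b2.1 ∧
  ∃ e : V × V, e ∈ edgesOf (G.blkNewSeg b1) ∧ e ∈ edgesOf (G.blkOldSeg b2) ∧
    G.cap e.1 e.2 < G.demand b1.1 + G.demand b2.1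

/-- The dependency graph contains a directed cycle. -/
def HasDepCycle (G : UFN V k) : Prop := ∃ b : Blk V k, Relation.TransGen G.Dep b b

/-- The number of rounds used by an update sequence. -/
def numRounds [Fintype V] (R : V × Fin k → ℕ) : ℕ :=
  (Finset.image R Finset.univ).card

/-- An update `(v, i)` is empty if `v`'s outgoing old edge and outgoing new edge
for pair `i` coincide (in particular if `v` has no outgoing edge for pair `i`). -/
def EmptyUpd (G : UFN V k) (u : V × Fin k) : Prop :=
  outEdge (G.old u.2) u.1 = outEdge (G.new u.2) u.1

instance (G : UFN V k) (u : V × Fin k) : Decidable (G.EmptyUpd u) :=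
  inferInstanceAs (Decidable (outEdge (G.old u.2) u.1 = outEdge (G.new u.2) u.1))

/-- `R` updates every block in (at most) 3 consecutive rounds: first all internal
update-path vertices of the block, then the start vertex, then all old-path-only
vertices of the block. -/
def BlockPattern (G : UFN V k) (R : V × Fin k → ℕ) : Prop :=
  ∀ b : Blk V k, G.IsBlk b → ∃ r : ℕ,
    (∀ v ∈ G.blkNewSeg b, v ≠ b.2.1 → v ≠ b.2.2 → R (v, b.1) = r) ∧
    R (b.2.1, b.1) = r + 1 ∧
    (∀ v ∈ G.blkOldSeg b, v ∉ G.new b.1 → R (v, b.1) = r + 2)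

/-- The size of the network (total length of the flow paths). -/
def size (G : UFN V k) : ℕ := ∑ i : Fin k, ((G.old i).length + (G.new i).length)

end UFN

end FlowUpdate

namespace FlowUpdate

/-! The update flow network `GC C n` constructed from a 3-SAT formula `C` with
`n` variables, as in the NP-hardness reduction.  The six flow pairs are indexed
by `Fin 6`: `0 = X`, `1 = X̄`, `2,3,4 = D₁,D₂,D₃`, `5 = B`; all have demand 1. -/

/-- A 3-SAT clause: three literals, each a variable index with a polarity. -/
abbrev Clause := Fin 3 → ℕ × Bool

/-- `σ` satisfies the formula `C`. -/
def Satisfies (C : List Clause) (σ : ℕ → Bool) : Prop :=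
  ∀ cl ∈ C, ∃ p : Fin 3, σ (cl p).1 = (cl p).2

/-- All variable indices occurring in `C` are `< n`. -/
def GoodFormula (C : List Clause) (n : ℕ) : Prop :=
  ∀ cl ∈ C, ∀ p : Fin 3, (cl p).1 < n

/-- The vertices of the network `GC C n`. -/
inductive GV where
  | s | t
  | u (i : ℕ) | v (i : ℕ)
  | uu (i : ℕ) (j : Fin 3) | vv (i : ℕ) (j : Fin 3)
  | w1 (j : ℕ) | w2 (j : ℕ)
deriving DecidableEq

/-- Capacities: `(w1 j, w2 j)` has capacity 2, `(u i, v i)` capacity 3, the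
detour edges `(uu i p, vv i p)` capacity 1, all other edges capacity 6. -/
def capC : GV → GV → ℕ
  | .w1 j, .w2 j' => if j = j' then 2 else 6
  | .u i, .v i' => if i = i' then 3 else 6
  | .uu i p, .vv i' p' => if i = i' ∧ p = p' then 1 else 6
  | _, _ => 6

/-- The occurrences (clause index, position) of the literal `(j, pol)` in `C`. -/
def occ (C : List Clause) (j : ℕ) (pol : Bool) : List (ℕ × Fin 3) :=
  (List.range C.length).flatMap fun i =>
    (List.finRange 3).filterMap fun p =>
      if (C.getD i (fun _ => (0, true))) p = (j, pol) then some (i, p) else none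

/-- The detour vertices visited by the old path of the literal `(j, pol)`. -/
def litPath (C : List Clause) (j : ℕ) (pol : Bool) : List GV :=
  (occ C j pol).flatMap fun ip => [GV.uu ip.1 ip.2, GV.vv ip.1 ip.2]

/-- The old path of `X` (`pol = true`) resp. of `X̄` (`pol = false`). -/
def Xold (C : List Clause) (n : ℕ) (pol : Bool) : List GV :=
  [GV.s] ++ ((List.range n).flatMap fun j => [GV.w1 j] ++ litPath C j pol ++ [GV.w2 j]) ++ [GV.t]

/-- The update path of `X` and `X̄`, which is also the old path of `B`. -/
def Xupd (n : ℕ) : List GV :=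
  [GV.s] ++ ((List.range n).flatMap fun j => [GV.w1 j, GV.w2 j]) ++ [GV.t]

/-- The old path of each `D_j`, which is also the update path of `B`. -/
def Dold (m : ℕ) : List GV :=
  [GV.s] ++ ((List.range m).flatMap fun i => [GV.u i, GV.v i]) ++ [GV.t]

/-- The update path of `D_j`, detouring each clause edge through `(uu i j, vv i j)`. -/
def Dupd (m : ℕ) (j : Fin 3) : List GV :=
  [GV.s] ++ ((List.range m).flatMap fun i => [GV.u i, GV.uu i j, GV.vv i j, GV.v i]) ++ [GV.t]

/-- The update flow network constructed from the 3-SAT formula `C` with `n`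
variables. -/
def GC (C : List Clause) (n : ℕ) : UFN GV 6 where
  s := GV.s
  t := GV.t
  cap := capC
  old := ![Xold C n true, Xold C n false, Dold C.length, Dold C.length, Dold C.length, Xupd n]
  new := ![Xupd n, Xupd n, Dupd C.length 0, Dupd C.length 1, Dupd C.length 2, Dold C.length]
  demand := fun _ => 1

end FlowUpdate

/-!
Give the vertices of `GC C n` levels: `s` at `0`, `w1 j` at `2j+1`, `w2 j` and the detour
vertices of the literals of variable `j` at `2j+2`, and `t` together with the clause gadget at
`2n+1`. Every edge that `X` or `X̄` can use, and every edge that `B` can use while `s` has not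
updated `B`, raises the level by at most one, so each of their transient paths visits `w1 j`,
the only vertex at level `2j+1`. Once `(w1 j, X)` is resolved, the only active edge of `X` out
of `w1 j` is `(w1 j, w2 j)`; likewise for `X̄`, and for `B`, whose update path avoids `w1 j`.
Three unit flows on this edge of capacity `2` contradict feasibility.
-/

namespace FlowUpdate

section Paths

variable {α : Type}

@[simp]
lemma edgesOf_cons_cons (a b : α) (l : List α) :
    edgesOf (a :: b :: l) = (a, b) :: edgesOf (b :: l) := rfl

lemma fst_mem_of_mem_edgesOf {p : List α} {e : α × α} (h : e ∈ edgesOf p) : e.1 ∈ p :=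
  (List.of_mem_zip h).1

lemma snd_mem_of_mem_edgesOf {p : List α} {e : α × α} (h : e ∈ edgesOf p) : e.2 ∈ p :=
  List.mem_of_mem_tail (List.of_mem_zip h).2

lemma rel_of_mem_edgesOf {R : α → α → Prop} {p : List α} (hp : p.IsChain R) {e : α × α}
    (he : e ∈ edgesOf p) : R e.1 e.2 := by
  induction hp with
  | nil => simp [edgesOf] at he
  | singleton => simp [edgesOf] at he
  | cons_cons hr _ ih =>
    rcases List.mem_cons.mp he with rfl | he
    exacts [hr, ih he]

lemma exists_mem_edgesOf_of_ne_getLast {x b : α} :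
    ∀ {p : List α}, x ∈ p → p.getLast? = some b → x ≠ b → ∃ y, (x, y) ∈ edgesOf p
  | [], hx, _, _ => by simp at hx
  | [a], hx, hb, hxb => by simp_all
  | a :: c :: l, hx, hb, hxb => by
    rcases List.mem_cons.mp hx with rfl | hx
    · exact ⟨c, by simp⟩
    · rw [List.getLast?_cons_cons] at hb
      obtain ⟨y, hy⟩ := exists_mem_edgesOf_of_ne_getLast hx hb hxb
      exact ⟨y, by simp [hy]⟩

lemma exists_mem_eq_of_isChain_le_add_one {g : α → ℕ} {τ : ℕ} {b : α} :
    ∀ {p : List α} {a : α}, p.IsChain (fun x y => g y ≤ g x + 1) → p.head? = some a →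
      p.getLast? = some b → g a ≤ τ → τ ≤ g b → ∃ x ∈ p, g x = τ
  | [], _, _, ha, _, _, _ => by simp at ha
  | [x], a, _, ha, hb, hτa, hτb => by
    simp only [List.head?_cons, List.getLast?_singleton, Option.some.injEq] at ha hb
    subst ha hb
    exact ⟨x, by simp, by omega⟩
  | x :: y :: l, a, hp, ha, hb, hτa, hτb => by
    simp only [List.head?_cons, Option.some.injEq] at ha
    subst ha
    rw [List.isChain_cons_cons] at hp
    by_cases hx : τ ≤ g x
    · exact ⟨x, by simp, by omega⟩
    · rw [List.getLast?_cons_cons] at hb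
      obtain ⟨z, hz, hgz⟩ := exists_mem_eq_of_isChain_le_add_one hp.2 rfl hb (by omega) hτb
      exact ⟨z, List.mem_cons_of_mem _ hz, hgz⟩

lemma isChain_cons_flatMap_range_append {R : α → α → Prop} {s t : α} {a z : ℕ → α}
    {m : ℕ → List α} (hblock : ∀ j, (a j :: m j ++ [z j]).IsChain R) (hs : R s (a 0))
    (hlink : ∀ j, R (z j) (a (j + 1))) :
    ∀ {n : ℕ}, (n = 0 → R s t) → (∀ j, j + 1 = n → R (z j) t) →
      (s :: (List.range n).flatMap (fun j => a j :: m j ++ [z j]) ++ [t]).IsChain R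
  | 0, hst, _ => by simpa using hst rfl
  | n + 1, _, hzt => by
    have hhead : (s :: (List.range n).flatMap (fun j => a j :: m j ++ [z j]) ++ [a n]).IsChain R :=
      isChain_cons_flatMap_range_append hblock hs hlink (fun hn => hn ▸ hs)
        (fun j hj => hj ▸ hlink j)
    have htail : ([a n] ++ (m n ++ [z n] ++ [t])).IsChain R := by
      rw [← List.append_assoc, List.isChain_append]
      refine ⟨hblock n, List.isChain_singleton t, fun x hx y hy => ?_⟩
      rw [← List.append_assoc, List.getLast?_concat, Option.mem_some_iff] at hx
      cases hx
      cases hy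
      exact hzt n rfl
    simpa [List.range_succ, List.flatMap_append] using hhead.append_overlap htail (by simp)

lemma UFN.mem_edgesOf_of_isPathIn {E : α × α → Prop} {s t : α} {p : List α}
    (hp : IsPathIn E s t p) (g : α → ℕ) (hE : ∀ e, E e → g e.2 ≤ g e.1 + 1) {c d : α}
    (hc : ∀ x, g x = g c → x = c) (hsc : g s ≤ g c) (hct : g c < g t)
    (hout : ∀ y, E (c, y) → y = d) : (c, d) ∈ edgesOf p := by
  obtain ⟨hs, ht, hchain, -⟩ := hp
  have hchain' : p.IsChain (fun x y => g y ≤ g x + 1) := hchain.imp fun x y h => hE (x, y) h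
  obtain ⟨x, hx, hgx⟩ := exists_mem_eq_of_isChain_le_add_one hchain' hs ht hsc hct.le
  obtain rfl := hc x hgx
  obtain ⟨y, hy⟩ := exists_mem_edgesOf_of_ne_getLast hx ht (by rintro rfl; omega)
  rwa [← hout y (rel_of_mem_edgesOf hchain hy)]

end Paths

def level (C : List Clause) (n : ℕ) : GV → ℕ
  | .s => 0
  | .t => 2 * n + 1
  | .u _ => 2 * n + 1
  | .v _ => 2 * n + 1
  | .uu i p => 2 * ((C.getD i fun _ => (0, true)) p).1 + 2
  | .vv i p => 2 * ((C.getD i fun _ => (0, true)) p).1 + 2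
  | .w1 j => 2 * j + 1
  | .w2 j => 2 * j + 2

variable {C : List Clause} {n : ℕ}

lemma eq_w1_of_level_eq {j : ℕ} (hj : j < n) {x : GV} (h : level C n x = 2 * j + 1) :
    x = .w1 j := by
  cases x <;> simp only [level, GV.w1.injEq] at h ⊢ <;> omega

lemma level_of_mem_litPath {j : ℕ} {pol : Bool} {x : GV} (hx : x ∈ litPath C j pol) :
    level C n x = 2 * j + 2 := by
  simp only [litPath, occ, List.mem_flatMap, List.mem_range, List.mem_filterMap,
    List.mem_finRange, true_and] at hx
  obtain ⟨⟨i, p⟩, ⟨i, -, p, hp⟩, hx⟩ := hx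
  split_ifs at hp with hlit
  cases hp
  simp only [List.mem_cons, List.not_mem_nil, or_false] at hx
  rcases hx with rfl | rfl <;> simp [level, hlit]

lemma isChain_Xupd (C : List Clause) (n : ℕ) :
    (Xupd n).IsChain fun x y => level C n y = level C n x + 1 := by
  refine isChain_cons_flatMap_range_append (a := GV.w1) (z := GV.w2) (m := fun _ => [])
    (fun j => ?_) (by simp [level]) (fun j => ?_)
    (fun hn => by subst hn; rfl) (fun j hj => by simp only [level]; omega)
  · simp [level]
  · simp only [level]; omega

lemma isChain_Xold (C : List Clause) (n : ℕ) (pol : Bool) :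
    (Xold C n pol).IsChain fun x y => level C n y ≤ level C n x + 1 := by
  refine isChain_cons_flatMap_range_append (a := GV.w1) (z := GV.w2) (m := (litPath C · pol))
    (fun j => ?_) (by simp [level])
    (fun j => by simp only [level]; omega) (fun hn => by subst hn; simp only [level]; omega)
    (fun j hj => by simp only [level]; omega)
  have hmid : ∀ x ∈ litPath C j pol ++ [.w2 j], level C n x = 2 * j + 2 := by
    intro x hx
    rcases List.mem_append.mp hx with hx | hx
    · exact level_of_mem_litPath hx
    · simp_all [level]
  refine List.isChain_cons.mpr ⟨fun y hy => ?_, ?_⟩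
  · rw [hmid y (List.mem_of_mem_head? hy)]; simp [level]
  · exact List.Pairwise.isChain (List.pairwise_of_forall_mem_list
      fun x hx y hy => by rw [hmid x hx, hmid y hy]; omega)

lemma eq_s_or_level_eq_of_mem_Dold {x : GV} (hx : x ∈ Dold C.length) :
    x = .s ∨ level C n x = 2 * n + 1 := by
  simp only [Dold, List.mem_append, List.mem_flatMap, List.mem_cons, List.not_mem_nil,
    or_false] at hx
  rcases hx with (rfl | ⟨i, -, rfl | rfl⟩) | rfl <;> simp [level]

lemma eq_w2_of_mem_edgesOf_Xupd {j : ℕ} {y : GV} (h : (GV.w1 j, y) ∈ edgesOf (Xupd n)) :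
    y = .w2 j := by
  have hlevel : level [] n y = 2 * j + 2 := by
    simpa [level] using rel_of_mem_edgesOf (isChain_Xupd [] n) h
  have hy := snd_mem_of_mem_edgesOf h
  simp only [Xupd, List.mem_append, List.mem_flatMap, List.mem_cons,
    List.not_mem_nil, or_false] at hy
  rcases hy with (rfl | ⟨i, -, rfl | rfl⟩) | rfl <;> simp only [level, GV.w2.injEq, reduceCtorEq] at hlevel ⊢ <;> omega

variable {U : Set (GV × Fin 6)} {j : ℕ}

lemma mem_edgesOf_of_transientPair_literal {i : Fin 6} {pol : Bool}
    (hold : (GC C n).old i = Xold C n pol) (hnew : (GC C n).new i = Xupd n) (hj : j < n)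
    (hU : (GV.w1 j, i) ∈ U) {T : List GV} (hT : (GC C n).TransientPair U i T) :
    (GV.w1 j, GV.w2 j) ∈ edgesOf T := by
  refine UFN.mem_edgesOf_of_isPathIn hT.1 (level C n) (fun e he => ?_)
    (fun x hx => eq_w1_of_level_eq hj hx) (Nat.zero_le _) (by simp only [GC, level]; omega)
    (fun y hy => ?_)
  · rcases he with ⟨he, -⟩ | ⟨he, -⟩
    · exact rel_of_mem_edgesOf (isChain_Xold C n pol) (hold ▸ he)
    · exact (rel_of_mem_edgesOf (isChain_Xupd C n) (hnew ▸ he)).le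
  · rcases hy with ⟨-, hU'⟩ | ⟨hy, -⟩
    · exact absurd hU hU'
    · exact eq_w2_of_mem_edgesOf_Xupd (hnew ▸ hy)

lemma mem_edgesOf_of_transientPair_blocking (hj : j < n) (hU : (GV.s, (5 : Fin 6)) ∉ U)
    {T : List GV} (hT : (GC C n).TransientPair U 5 T) :
    (GV.w1 j, GV.w2 j) ∈ edgesOf T := by
  refine UFN.mem_edgesOf_of_isPathIn hT.1 (level C n) (fun e he => ?_)
    (fun x hx => eq_w1_of_level_eq hj hx) (Nat.zero_le _) (by simp only [GC, level]; omega)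
    (fun y hy => ?_)
  · rcases he with ⟨he, -⟩ | ⟨he, he1⟩
    · exact (rel_of_mem_edgesOf (isChain_Xupd C n) he).le
    · have hfst : e.1 ≠ .s := by rintro h; exact hU (h ▸ he1)
      rcases eq_s_or_level_eq_of_mem_Dold (n := n) (fst_mem_of_mem_edgesOf he) with h | h
      · exact absurd h hfst
      rcases eq_s_or_level_eq_of_mem_Dold (n := n) (snd_mem_of_mem_edgesOf he) with h' | h'
      · simp [h', level]
      · omega
  · rcases hy with ⟨hy, -⟩ | ⟨hy, -⟩
    · exact eq_w2_of_mem_edgesOf_Xupd hy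
    · rcases eq_s_or_level_eq_of_mem_Dold (n := n) (fst_mem_of_mem_edgesOf hy) with h | h
      · simp at h
      · simp only [level] at h; omega

end FlowUpdate

open FlowUpdate in
theorem stmt9_general (C : List Clause) (n : ℕ)
    (R : GV × Fin 6 → ℕ) (hR : (GC C n).Feasible R)
    (r : ℕ) (hr : r < R (GV.s, 5)) (j : ℕ) (hj : j < n) :
    r < R (GV.w1 j, 0) ∨ r < R (GV.w1 j, 1) := by
  by_contra! h
  obtain ⟨T, hT, hcap⟩ := hR (r + 1) ∅ (by simp)
  have hX := mem_edgesOf_of_transientPair_literal rfl rfl hj (by simp; omega) (hT 0)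
  have hX' := mem_edgesOf_of_transientPair_literal rfl rfl hj (by simp; omega) (hT 1)
  have hB := mem_edgesOf_of_transientPair_blocking hj (by simp; omega) (hT 5)
  have hcap2 : (GC C n).cap (.w1 j) (.w2 j) = 2 := by simp [GC, capC]
  have hcapj := hcap (GV.w1 j) (GV.w2 j)
  rw [Fin.sum_univ_six, if_pos hX, if_pos hX', if_pos hB, hcap2] at hcapj
  simp only [GC] at hcapj
  omega

open FlowUpdate in
/-- In any feasible update sequence for `G(C)`, for every round `r`
strictly before the round in which `s` updates the blocking pair `B` and every
variable index `j`, at most one of the updates `(w1 j, X)` and `(w1 j, X̄)` has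
been resolved by round `r`. -/
theorem stmt9 (C : List Clause) (n : ℕ) (hC : GoodFormula C n)
    (R : GV × Fin 6 → ℕ) (hR : (GC C n).Feasible R)
    (r : ℕ) (hr : r < R (GV.s, 5)) (j : ℕ) (hj : j < n) :
    r < R (GV.w1 j, 0) ∨ r < R (GV.w1 j, 1) :=
  stmt9_general C n R hR r hr j hj
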